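/- Let $p$ be an odd prime and let $m$ be an integer with $p \nmid m$. Then the Haar probability measure on $\mathbb{Z}_p^3$ of the set of triples $(a,b,c) \in \mathbb{Z}_p^3$ such that $\min\{v_p(a), v_p(b), v_p(c)\} = 0$ and the equation $a x^2 + b y^2 + c z^2 = m$ has no solution $(x,y,z) \in \mathbb{Z}_p^3$ equals $\frac{3(p-1)}{2p^3}$. -/

import Mathlib

open MeasureTheory TopologicalSpace Filter

noncomputable section

instance padicMS (p : ℕ) [Fact p.Prime] : MeasurableSpace (ℤ_[p] × ℤ_[p] × ℤ_[p]) := borel _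
instance padicBS (p : ℕ) [Fact p.Prime] : BorelSpace (ℤ_[p] × ℤ_[p] × ℤ_[p]) := ⟨rfl⟩

/-- The Haar probability measure on `ℤ_p × ℤ_p × ℤ_p`, normalised so that the
total space has measure `1`. -/
def padicHaar (p : ℕ) [Fact p.Prime] : Measure (ℤ_[p] × ℤ_[p] × ℤ_[p]) :=
  Measure.addHaarMeasure ⊤

/-- `Ω_p`: the set of triples `(a,b,c) ∈ ℤ_p³` such that `a x² + b y² + c z² = n`
has a solution `(x,y,z) ∈ ℤ_p³`. -/
def Omega (p : ℕ) [Fact p.Prime] (n : ℤ) : Set (ℤ_[p] × ℤ_[p] × ℤ_[p]) :=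
  {t | ∃ x y z : ℤ_[p], t.1 * x ^ 2 + t.2.1 * y ^ 2 + t.2.2 * z ^ 2 = (n : ℤ_[p])}

/-!
Since `p` is odd and `m` is a unit, Hensel's lemma shows that `a x² + b y² + c z² = m` is solvable
over `ℤ_p` iff it is solvable over `𝔽_p`: a solution mod `p` has some `a x` a unit, and that
coordinate lifts. Over `𝔽_p` a diagonal form with two nonzero coefficients represents every element,
so the unsolvable triples with a nonzero coefficient are those with exactly one nonzero coefficient
`a`, and `m / a` a nonsquare: there are `3 (p - 1) / 2` of them. By translation invariance each
residue class of `ℤ_p³` mod `p` has Haar measure `p⁻³`.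
-/

open Finset Polynomial
open scoped ENNReal

theorem exists_mul_sq_eq_iff_isSquare_mul {F : Type*} [Field F] {a : F} (ha : a ≠ 0) (c : F) :
    (∃ x, a * x ^ 2 = c) ↔ IsSquare (c * a) := by
  constructor
  · rintro ⟨x, rfl⟩
    exact ⟨a * x, by ring⟩
  · rintro ⟨r, hr⟩
    exact ⟨r / a, by field_simp; linear_combination -hr⟩

namespace FiniteField

variable {F : Type*} [Field F] [Fintype F]

open scoped Classical in
theorem two_mul_card_nonsquares_add_one (hF : ringChar F ≠ 2) :
    2 * #{x : F | ¬IsSquare x} + 1 = Fintype.card F := by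
  have hχ (a : F) : 1 - (quadraticChar F a : ℤ) =
      2 * (if ¬IsSquare a then 1 else 0) + (if a = 0 then 1 else 0) := by
    by_cases h0 : a = 0
    · simp [h0]
    by_cases hsq : IsSquare a
    · simp [h0, hsq, (quadraticChar_one_iff_isSquare h0).2 hsq]
    · simp [h0, hsq, quadraticChar_neg_one_iff_not_isSquare.2 hsq]
  have hsum := sum_congr rfl fun a (_ : a ∈ univ) => hχ a
  rw [sum_sub_distrib, quadraticChar_sum_zero hF, sum_add_distrib, ← mul_sum, sum_boole,
    sum_boole, sub_zero, sum_const, card_univ, nsmul_one,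
    (card_eq_one (s := {x : F | x = 0})).2 ⟨0, by ext; simp⟩] at hsum
  exact_mod_cast hsum.symm

open scoped Classical in
theorem card_not_exists_mul_sq_eq {c : F} (hc : c ≠ 0) :
    #{a : F | a ≠ 0 ∧ ¬∃ x, a * x ^ 2 = c} = #{x : F | ¬IsSquare x} := by
  refine card_equiv (Equiv.mulRight₀ c hc) fun a => ?_
  simp only [mem_filter, mem_univ, true_and, Equiv.mulRight₀_apply]
  by_cases ha : a = 0
  · simp [ha]
  · simp [ha, exists_mul_sq_eq_iff_isSquare_mul ha, mul_comm]

theorem exists_mul_sq_add_mul_sq_eq (hF : ringChar F ≠ 2) {a b : F} (ha : a ≠ 0) (hb : b ≠ 0)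
    (c : F) : ∃ x y, a * x ^ 2 + b * y ^ 2 = c := by
  obtain ⟨x, y, hxy⟩ := exists_root_sum_quadratic
    (f := C a * X ^ 2 + C 0 * X + C (-c)) (g := C b * X ^ 2 + C 0 * X + C 0)
    (degree_quadratic ha) (degree_quadratic hb) (odd_card_of_char_ne_two hF)
  refine ⟨x, y, ?_⟩
  simp only [eval_add, eval_mul, eval_pow, eval_C, eval_X, zero_mul, add_zero] at hxy
  linear_combination hxy

open scoped Classical in
def diagTernaryUnsolvable (c : F) : Finset (F × F × F) :=
  {v | v ≠ 0 ∧ ¬∃ x y z, v.1 * x ^ 2 + v.2.1 * y ^ 2 + v.2.2 * z ^ 2 = c}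

theorem mem_diagTernaryUnsolvable (hF : ringChar F ≠ 2) {c : F} (a b d : F) :
    (a, b, d) ∈ diagTernaryUnsolvable c ↔
      (a ≠ 0 ∧ (¬∃ x, a * x ^ 2 = c) ∧ b = 0 ∧ d = 0) ∨
      (b ≠ 0 ∧ (¬∃ y, b * y ^ 2 = c) ∧ a = 0 ∧ d = 0) ∨
      (d ≠ 0 ∧ (¬∃ z, d * z ^ 2 = c) ∧ a = 0 ∧ b = 0) := by
  simp only [diagTernaryUnsolvable, mem_filter, mem_univ, true_and, ne_eq, Prod.mk_eq_zero]
  constructor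
  · rintro ⟨hv, hns⟩
    have hab : ¬(a ≠ 0 ∧ b ≠ 0) := fun ⟨ha, hb⟩ =>
      let ⟨x, y, h⟩ := exists_mul_sq_add_mul_sq_eq hF ha hb c
      hns ⟨x, y, 0, by simpa using h⟩
    have had : ¬(a ≠ 0 ∧ d ≠ 0) := fun ⟨ha, hd⟩ =>
      let ⟨x, z, h⟩ := exists_mul_sq_add_mul_sq_eq hF ha hd c
      hns ⟨x, 0, z, by simpa using h⟩
    have hbd : ¬(b ≠ 0 ∧ d ≠ 0) := fun ⟨hb, hd⟩ =>
      let ⟨y, z, h⟩ := exists_mul_sq_add_mul_sq_eq hF hb hd c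
      hns ⟨0, y, z, by simpa using h⟩
    have hx : ¬∃ x, a * x ^ 2 = c := fun ⟨x, h⟩ => hns ⟨x, 0, 0, by simpa using h⟩
    have hy : ¬∃ y, b * y ^ 2 = c := fun ⟨y, h⟩ => hns ⟨0, y, 0, by simpa using h⟩
    have hz : ¬∃ z, d * z ^ 2 = c := fun ⟨z, h⟩ => hns ⟨0, 0, z, by simpa using h⟩
    tauto
  · rintro (⟨ha, hx, rfl, rfl⟩ | ⟨hb, hy, rfl, rfl⟩ | ⟨hd, hz, rfl, rfl⟩)
    · exact ⟨by simp [ha], fun ⟨x, _, _, h⟩ => hx ⟨x, by simpa using h⟩⟩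
    · exact ⟨by simp [hb], fun ⟨_, y, _, h⟩ => hy ⟨y, by simpa using h⟩⟩
    · exact ⟨by simp [hd], fun ⟨_, _, z, h⟩ => hz ⟨z, by simpa using h⟩⟩

open scoped Classical in
theorem card_diagTernaryUnsolvable (hF : ringChar F ≠ 2) (c : F) :
    #(diagTernaryUnsolvable c) = 3 * #{a : F | a ≠ 0 ∧ ¬∃ x, a * x ^ 2 = c} := by
  set N : Finset F := {a | a ≠ 0 ∧ ¬∃ x, a * x ^ 2 = c}
  have hD : diagTernaryUnsolvable c =
      (N.image (fun a => (a, 0, 0)) ∪ N.image (fun b => (0, b, 0))) ∪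
        N.image (fun d => (0, 0, d)) := by
    ext ⟨a, b, d⟩
    simp only [mem_diagTernaryUnsolvable hF, mem_union, mem_image, Prod.mk.injEq, N, mem_filter,
      mem_univ, true_and]
    aesop
  rw [hD, card_union_of_disjoint, card_union_of_disjoint,
    card_image_of_injective N fun _ _ h => by simpa using h,
    card_image_of_injective N fun _ _ h => by simpa using h,
    card_image_of_injective N fun _ _ h => by simpa using h]
  · ring
  · simp only [disjoint_left, mem_image, N]
    aesop
  · simp only [disjoint_left, mem_union, mem_image, N]
    aesop

theorem two_mul_card_diagTernaryUnsolvable_add_three (hF : ringChar F ≠ 2) {c : F} (hc : c ≠ 0) :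
    2 * #(diagTernaryUnsolvable c) + 3 = 3 * Fintype.card F := by
  rw [card_diagTernaryUnsolvable hF, card_not_exists_mul_sq_eq hc,
    ← two_mul_card_nonsquares_add_one hF]
  ring

end FiniteField

theorem AddMonoidHom.card_mul_measure_preimage {G H : Type*} [AddGroup G] [MeasurableSpace G]
    [MeasurableAdd G] [AddGroup H] [Fintype H] (f : G →+ H) (hf : Function.Surjective f)
    (hf₀ : MeasurableSet (f ⁻¹' {0})) (μ : Measure G) [μ.IsAddLeftInvariant]
    (s : Finset H) : Fintype.card H * μ (f ⁻¹' s) = #s * μ Set.univ := by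
  have hker : MeasurableSet (f.ker : Set G) := hf₀
  have hfiber (v : H) : f ⁻¹' {v} = (fun x => -Function.surjInv hf v + x) ⁻¹' f.ker := by
    ext x
    simp only [Set.mem_preimage, Set.mem_singleton_iff, SetLike.mem_coe, AddMonoidHom.mem_ker,
      map_add, map_neg, Function.surjInv_eq hf, neg_add_eq_zero]
    exact eq_comm
  have hindex : (Fintype.card H : ℝ≥0∞) * μ f.ker = μ Set.univ := by
    rw [← AddSubgroup.index_mul_measure f.ker hker μ, AddSubgroup.index_ker,
      AddMonoidHom.range_eq_top.2 hf, AddSubgroup.card_top, Nat.card_eq_fintype_card]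
  rw [← sum_measure_preimage_singleton s fun v _ => hfiber v ▸ measurable_const_add _ hker]
  simp only [hfiber, measure_preimage_add, sum_const, nsmul_eq_mul, ← hindex]
  ring

namespace PadicInt

variable {p : ℕ} [Fact p.Prime]

theorem toZMod_eq_zero_iff_dvd (a : ℤ_[p]) : toZMod a = 0 ↔ (p : ℤ_[p]) ∣ a := by
  rw [← RingHom.mem_ker, ker_toZMod, maximalIdeal_eq_span_p, Ideal.mem_span_singleton]

theorem norm_lt_one_iff_toZMod_eq_zero (a : ℤ_[p]) : ‖a‖ < 1 ↔ toZMod a = 0 := by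
  rw [norm_lt_one_iff_dvd, toZMod_eq_zero_iff_dvd]

theorem norm_eq_one_of_toZMod_ne_zero {a : ℤ_[p]} (h : toZMod a ≠ 0) : ‖a‖ = 1 :=
  (norm_le_one a).antisymm (not_lt.1 ((norm_lt_one_iff_toZMod_eq_zero a).not.2 h))

theorem isOpen_setOf_toZMod_eq_zero : IsOpen {a : ℤ_[p] | toZMod a = 0} := by
  convert Metric.isOpen_ball (x := (0 : ℤ_[p])) (ε := 1) using 1
  ext a
  simp [norm_lt_one_iff_toZMod_eq_zero]

theorem toZMod_two_ne_zero (hp : p ≠ 2) : toZMod (2 : ℤ_[p]) ≠ 0 := by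
  rw [map_ofNat, Ne, ← Nat.cast_ofNat, ZMod.natCast_eq_zero_iff,
    Nat.prime_dvd_prime_iff_eq Fact.out Nat.prime_two]
  exact hp

theorem exists_mul_sq_add_eq (hp : p ≠ 2) {a r u x₀ : ℤ_[p]} (h₀ : toZMod (a * x₀) ≠ 0)
    (h : toZMod (a * x₀ ^ 2 + r) = toZMod u) : ∃ x, a * x ^ 2 + r = u := by
  set f : ℤ_[p][X] := C a * X ^ 2 + C r - C u
  have hf : ‖f.aeval x₀‖ < 1 := by
    rw [norm_lt_one_iff_toZMod_eq_zero]
    simp [f, h]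
  have hf' : ‖f.derivative.aeval x₀‖ = 1 := by
    have hd : f.derivative.aeval x₀ = 2 * (a * x₀) := by simp [f]; ring
    rw [hd]
    exact norm_eq_one_of_toZMod_ne_zero
      (by rw [map_mul]; exact mul_ne_zero (toZMod_two_ne_zero hp) h₀)
  obtain ⟨x, hx, -⟩ := hensels_lemma (F := f) (a := x₀) (by rw [hf', one_pow]; exact hf)
  exact ⟨x, by simpa [f, sub_eq_zero] using hx⟩

theorem exists_mul_sq_add_mul_sq_add_mul_sq_eq_iff (hp : p ≠ 2) {u : ℤ_[p]} (hu : toZMod u ≠ 0)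
    (a b c : ℤ_[p]) :
    (∃ x y z : ℤ_[p], a * x ^ 2 + b * y ^ 2 + c * z ^ 2 = u) ↔
      ∃ x y z : ZMod p, toZMod a * x ^ 2 + toZMod b * y ^ 2 + toZMod c * z ^ 2 = toZMod u := by
  constructor
  · rintro ⟨x, y, z, h⟩
    exact ⟨toZMod x, toZMod y, toZMod z, by simpa using congrArg toZMod h⟩
  rintro ⟨x₀, y₀, z₀, h⟩
  obtain ⟨X, rfl⟩ := ZMod.ringHom_surjective toZMod x₀
  obtain ⟨Y, rfl⟩ := ZMod.ringHom_surjective toZMod y₀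
  obtain ⟨Z, rfl⟩ := ZMod.ringHom_surjective toZMod z₀
  simp only [← map_pow, ← map_mul, ← map_add] at h
  by_cases ha : toZMod (a * X) = 0
  · by_cases hb : toZMod (b * Y) = 0
    · by_cases hc : toZMod (c * Z) = 0
      · refine absurd ?_ hu
        rw [← h]
        simp only [map_add, map_mul, map_pow] at ha hb hc ⊢
        linear_combination toZMod X * ha + toZMod Y * hb + toZMod Z * hc
      · obtain ⟨z, hz⟩ := exists_mul_sq_add_eq hp hc (r := a * X ^ 2 + b * Y ^ 2)
          (by rw [← h, add_comm])
        exact ⟨X, Y, z, by linear_combination hz⟩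
    · obtain ⟨y, hy⟩ := exists_mul_sq_add_eq hp hb (r := a * X ^ 2 + c * Z ^ 2)
        (by rw [← h]; congr 1; ring)
      exact ⟨X, y, Z, by linear_combination hy⟩
  · obtain ⟨x, hx⟩ := exists_mul_sq_add_eq hp ha (r := b * Y ^ 2 + c * Z ^ 2)
      (by rw [← h, add_assoc])
    exact ⟨x, Y, Z, by linear_combination hx⟩

variable (p) in
def toZModTriple : ℤ_[p] × ℤ_[p] × ℤ_[p] →+* ZMod p × ZMod p × ZMod p :=
  toZMod.prodMap (toZMod.prodMap toZMod)

theorem toZModTriple_surjective : Function.Surjective (toZModTriple p) := by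
  rw [toZModTriple, RingHom.coe_prodMap, RingHom.coe_prodMap]
  exact (ZMod.ringHom_surjective _).prodMap
    ((ZMod.ringHom_surjective _).prodMap (ZMod.ringHom_surjective _))

theorem isOpen_toZModTriple_preimage_zero : IsOpen (toZModTriple p ⁻¹' {0}) := by
  have h := isOpen_setOf_toZMod_eq_zero (p := p)
  convert h.prod (h.prod h) using 1
  ext t
  simp [toZModTriple, Prod.ext_iff]

theorem preimage_toZModTriple_diagTernaryUnsolvable (hp : p ≠ 2) {u : ℤ_[p]} (hu : toZMod u ≠ 0) :
    toZModTriple p ⁻¹' FiniteField.diagTernaryUnsolvable (toZMod u) =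
      {t | ¬((p : ℤ_[p]) ∣ t.1 ∧ (p : ℤ_[p]) ∣ t.2.1 ∧ (p : ℤ_[p]) ∣ t.2.2) ∧
        ¬∃ x y z : ℤ_[p], t.1 * x ^ 2 + t.2.1 * y ^ 2 + t.2.2 * z ^ 2 = u} := by
  ext ⟨a, b, c⟩
  simp [FiniteField.diagTernaryUnsolvable, toZModTriple,
    exists_mul_sq_add_mul_sq_add_mul_sq_eq_iff hp hu, toZMod_eq_zero_iff_dvd]

instance isAddLeftInvariant_padicHaar : (padicHaar p).IsAddLeftInvariant := by
  unfold padicHaar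
  infer_instance

theorem padicHaar_univ : padicHaar p Set.univ = 1 := by
  rw [← PositiveCompacts.coe_top]
  exact Measure.addHaarMeasure_self

theorem pow_three_mul_padicHaar_preimage_toZModTriple (s : Finset (ZMod p × ZMod p × ZMod p)) :
    (p : ℝ≥0∞) ^ 3 * padicHaar p (toZModTriple p ⁻¹' s) = #s := by
  have h := (toZModTriple p).toAddMonoidHom.card_mul_measure_preimage toZModTriple_surjective
    isOpen_toZModTriple_preimage_zero.measurableSet (padicHaar p) s
  rw [padicHaar_univ, mul_one, Fintype.card_prod, Fintype.card_prod, ZMod.card,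
    RingHom.toAddMonoidHom_eq_coe, AddMonoidHom.coe_coe] at h
  rw [← h]
  push_cast
  ring

end PadicInt

/-- For an odd prime `p` and an integer `m` with `p ∤ m`, the Haar probability
measure of the set of triples `(a,b,c) ∈ ℤ_p³` with `min {v_p(a), v_p(b), v_p(c)} = 0`
(i.e. not all of `a`, `b`, `c` divisible by `p`) for which `a x² + b y² + c z² = m`
has no solution in `ℤ_p³` equals `3(p-1)/(2p³)`. -/
theorem stmt5 (p : ℕ) [Fact p.Prime] (hp2 : p ≠ 2) (m : ℤ) (hpm : ¬ (p : ℤ) ∣ m) :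
    (padicHaar p {t : ℤ_[p] × ℤ_[p] × ℤ_[p] |
        ¬((p : ℤ_[p]) ∣ t.1 ∧ (p : ℤ_[p]) ∣ t.2.1 ∧ (p : ℤ_[p]) ∣ t.2.2) ∧
        ¬ ∃ x y z : ℤ_[p], t.1 * x ^ 2 + t.2.1 * y ^ 2 + t.2.2 * z ^ 2 = (m : ℤ_[p])}).toReal
      = 3 * ((p : ℝ) - 1) / (2 * (p : ℝ) ^ 3) := by
  have hu : PadicInt.toZMod (m : ℤ_[p]) ≠ 0 := by
    rwa [map_intCast, Ne, ZMod.intCast_zmod_eq_zero_iff_dvd]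
  have hF : ringChar (ZMod p) ≠ 2 := by rwa [ZMod.ringChar_zmod_n]
  set S := FiniteField.diagTernaryUnsolvable (PadicInt.toZMod (m : ℤ_[p]))
  have hcount := FiniteField.two_mul_card_diagTernaryUnsolvable_add_three hF hu
  rw [ZMod.card] at hcount
  have hmeas := congrArg ENNReal.toReal (PadicInt.pow_three_mul_padicHaar_preimage_toZModTriple S)
  rw [PadicInt.preimage_toZModTriple_diagTernaryUnsolvable hp2 hu, ENNReal.toReal_mul,
    ENNReal.toReal_pow, ENNReal.toReal_natCast, ENNReal.toReal_natCast] at hmeas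
  have hp : (0 : ℝ) < p := by exact_mod_cast (Fact.out : p.Prime).pos
  rw [eq_div_iff (by positivity)]
  linear_combination 2 * hmeas + (by exact_mod_cast hcount : (2 * #S + 3 : ℝ) = 3 * p)

end
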